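/- arXiv:2501.13234 — 3 statements merged into one kernel-verified Lean document; each statement's English description precedes it below -/
import Mathlib

section
/- (Local-to-global lemma.) Let X be a δ-hyperbolic geodesic metric space, let A ≥ 0, and set D = A + 6δ. Suppose x₀, x₁, ..., x_n are points in X such that (x_{i-1} | x_{i+1})_{x_i} ≤ A for each 0 < i < n and d(x_i, x_{i+1}) > 4A + 24δ for each 0 ≤ i < n. Then any geodesic joining x₀ and x_n passes within distance D of each point x_i, and d(x₀, x_n) ≥ d(x₀,x₁) + d(x₁,x₂) + ... + d(x_{n-1},x_n) - 2D(n-1). -/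
open Set Metric

/-- The Gromov product of `x` and `y` with respect to the basepoint `z`. -/
noncomputable def gromovProd {X : Type*} [MetricSpace X] (x y z : X) : ℝ :=
  (dist x z + dist y z - dist x y) / 2

/-- `γ` is a geodesic (parametrized by arc length on `[0, dist a b]`) from `a` to `b`. -/
def IsGeodesicFrom {X : Type*} [MetricSpace X] (γ : ℝ → X) (a b : X) : Prop :=
  γ 0 = a ∧ γ (dist a b) = b ∧
    ∀ s ∈ Icc (0 : ℝ) (dist a b), ∀ t ∈ Icc (0 : ℝ) (dist a b), dist (γ s) (γ t) = |s - t|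

lemma gromovProd_comm' {X : Type*} [MetricSpace X] (a b c : X) :
    gromovProd a b c = gromovProd b a c := by
  simp only [gromovProd]; rw [dist_comm a b]; ring

lemma gromovProd_add' {X : Type*} [MetricSpace X] (a b c : X) :
    gromovProd a b c + gromovProd c b a = dist a c := by
  simp only [gromovProd]; rw [dist_comm c a, dist_comm b a, dist_comm c b]; ring

lemma chainQ {X : Type*} [MetricSpace X] (δ A : ℝ) (hδ : 0 ≤ δ) (hA : 0 ≤ A)
    (hhyp : ∀ x y z w : X, min (gromovProd x z w) (gromovProd y z w) - δ ≤ gromovProd x y w)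
    (x : ℕ → X) (n : ℕ)
    (hgp : ∀ i, 0 < i → i < n → gromovProd (x (i - 1)) (x (i + 1)) (x i) ≤ A)
    (hdist : ∀ i < n, dist (x i) (x (i + 1)) > 4 * A + 24 * δ) :
    ∀ k, 0 < k → k < n → ∀ i < k, gromovProd (x i) (x (k + 1)) (x k) ≤ A + 2 * δ := by
  intro k
  induction k with
  | zero => intro h; exact absurd h (lt_irrefl 0)
  | succ k ih =>
    intro _ hkn i hik
    have hgpk : gromovProd (x k) (x (k + 1 + 1)) (x (k + 1)) ≤ A := by
      have := hgp (k + 1) (Nat.succ_pos k) hkn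
      simpa using this
    rcases Nat.lt_succ_iff_lt_or_eq.mp hik with hik' | rfl
    · have hk0 : 0 < k := Nat.lt_of_le_of_lt (Nat.zero_le i) hik'
      have hIH : gromovProd (x i) (x (k + 1)) (x k) ≤ A + 2 * δ :=
        ih hk0 (Nat.lt_of_succ_lt hkn) i hik'
      have hadd := gromovProd_add' (x k) (x i) (x (k + 1))
      have hcomm : gromovProd (x (k + 1)) (x i) (x k) = gromovProd (x i) (x (k + 1)) (x k) :=
        gromovProd_comm' _ _ _
      have hd : dist (x k) (x (k + 1)) > 4 * A + 24 * δ := hdist k (Nat.lt_of_succ_lt hkn)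
      have hbig : gromovProd (x k) (x i) (x (k + 1)) > 3 * A + 22 * δ := by linarith
      have hmin := hhyp (x k) (x (k + 1 + 1)) (x i) (x (k + 1))
      have hgoal : gromovProd (x (k + 1 + 1)) (x i) (x (k + 1)) ≤ A + δ := by
        rcases le_total (gromovProd (x k) (x i) (x (k + 1)))
            (gromovProd (x (k + 1 + 1)) (x i) (x (k + 1))) with h | h
        · rw [min_eq_left h] at hmin; linarith
        · rw [min_eq_right h] at hmin; linarith
      rw [gromovProd_comm']; linarith
    · linarith [hgpk]

lemma chainMain {X : Type*} [MetricSpace X] (δ A : ℝ) (hδ : 0 ≤ δ) (hA : 0 ≤ A)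
    (hhyp : ∀ x y z w : X, min (gromovProd x z w) (gromovProd y z w) - δ ≤ gromovProd x y w)
    (x : ℕ → X) (n : ℕ)
    (hgp : ∀ i, 0 < i → i < n → gromovProd (x (i - 1)) (x (i + 1)) (x i) ≤ A)
    (hdist : ∀ i < n, dist (x i) (x (i + 1)) > 4 * A + 24 * δ) :
    ∀ i, 0 < i → i < n → gromovProd (x 0) (x n) (x i) ≤ A + 3 * δ := by
  intro i hi0 hin
  have hfwd : gromovProd (x 0) (x (i + 1)) (x i) ≤ A + 2 * δ :=
    chainQ δ A hδ hA hhyp x n hgp hdist i hi0 hin 0 hi0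
  by_cases hlast : i + 1 = n
  · rw [← hlast]; linarith
  · have hin1 : i + 1 < n := lt_of_le_of_ne (Nat.succ_le_of_lt hin) hlast
    have hrev : gromovProd (x n) (x i) (x (i + 1)) ≤ A + 2 * δ := by
      have hgp' : ∀ j, 0 < j → j < n →
          gromovProd (x (n - (j - 1))) (x (n - (j + 1))) (x (n - j)) ≤ A := by
        intro j hj0 hjn
        have e1 : n - (j - 1) = (n - j) + 1 := by omega
        have e2 : n - (j + 1) = (n - j) - 1 := by omega
        rw [e1, e2, gromovProd_comm']
        exact hgp (n - j) (by omega) (by omega)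
      have hdist' : ∀ j, j < n → dist (x (n - j)) (x (n - (j + 1))) > 4 * A + 24 * δ := by
        intro j hjn
        have e1 : n - j = (n - (j + 1)) + 1 := by omega
        rw [e1, dist_comm]
        exact hdist (n - (j + 1)) (by omega)
      have hQ := chainQ δ A hδ hA hhyp (fun j => x (n - j)) n hgp' hdist'
        (n - (i + 1)) (by omega) (by omega) 0 (by omega)
      have e1 : n - (n - (i + 1) + 1) = i := by omega
      have e2 : n - (n - (i + 1)) = i + 1 := by omega
      rw [e1, e2, Nat.sub_zero] at hQ
      exact hQ
    have hadd := gromovProd_add' (x (i + 1)) (x n) (x i)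
    have hrev' : gromovProd (x i) (x n) (x (i + 1)) ≤ A + 2 * δ := by
      rw [gromovProd_comm']; exact hrev
    have hd := hdist i hin
    have hc : dist (x (i + 1)) (x i) = dist (x i) (x (i + 1)) := dist_comm _ _
    have hbig : gromovProd (x (i + 1)) (x n) (x i) > 3 * A + 22 * δ := by linarith
    have hmin := hhyp (x 0) (x (i + 1)) (x n) (x i)
    rcases le_total (gromovProd (x 0) (x n) (x i)) (gromovProd (x (i + 1)) (x n) (x i)) with h | h
    · rw [min_eq_left h] at hmin; linarith
    · rw [min_eq_right h] at hmin; linarith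

lemma point_near {X : Type*} [MetricSpace X] (δ : ℝ)
    (hhyp : ∀ x y z w : X, min (gromovProd x z w) (gromovProd y z w) - δ ≤ gromovProd x y w)
    (a b z : X) (γ : ℝ → X) (hγ : IsGeodesicFrom γ a b) :
    ∃ t ∈ Icc (0 : ℝ) (dist a b), dist z (γ t) ≤ gromovProd a b z + 2 * δ := by
  obtain ⟨ha, hb, hiso⟩ := hγ
  set t := (dist a b + dist a z - dist b z) / 2 with ht
  have h1 : dist b z ≤ dist b a + dist a z := dist_triangle _ _ _
  have h2 : dist a z ≤ dist a b + dist b z := dist_triangle _ _ _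
  have hba : dist b a = dist a b := dist_comm _ _
  have ht0 : 0 ≤ t := by rw [ht]; linarith
  have ht1 : t ≤ dist a b := by rw [ht]; linarith
  refine ⟨t, ⟨ht0, ht1⟩, ?_⟩
  have hL : (0 : ℝ) ≤ dist a b := dist_nonneg
  have dpa : dist a (γ t) = t := by
    have h := hiso 0 ⟨le_refl _, hL⟩ t ⟨ht0, ht1⟩
    rw [ha] at h
    rw [h, zero_sub, abs_neg, abs_of_nonneg ht0]
  have dpb : dist b (γ t) = dist a b - t := by
    have h := hiso (dist a b) ⟨hL, le_refl _⟩ t ⟨ht0, ht1⟩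
    rw [hb] at h
    rw [h, abs_of_nonneg (by linarith)]
  have hmin := hhyp a b (γ t) z
  have c1 : dist (γ t) z = dist z (γ t) := dist_comm _ _
  simp only [gromovProd] at hmin ⊢
  rcases le_total ((dist a z + dist (γ t) z - dist a (γ t)) / 2)
      ((dist b z + dist (γ t) z - dist b (γ t)) / 2) with h | h
  · rw [min_eq_left h] at hmin; linarith
  · rw [min_eq_right h] at hmin; linarith

/-- Local-to-global lemma. -/
theorem local_to_global {X : Type*} [MetricSpace X] (δ A : ℝ) (hδ : 0 ≤ δ) (hA : 0 ≤ A)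
    (hhyp : ∀ x y z w : X, min (gromovProd x z w) (gromovProd y z w) - δ ≤ gromovProd x y w)
    (hgeo : ∀ a b : X, ∃ γ : ℝ → X, IsGeodesicFrom γ a b)
    (x : ℕ → X) (n : ℕ)
    (hgp : ∀ i, 0 < i → i < n → gromovProd (x (i - 1)) (x (i + 1)) (x i) ≤ A)
    (hdist : ∀ i < n, dist (x i) (x (i + 1)) > 4 * A + 24 * δ) :
    (∀ γ : ℝ → X, IsGeodesicFrom γ (x 0) (x n) → ∀ i ≤ n,
        ∃ t ∈ Icc (0 : ℝ) (dist (x 0) (x n)), dist (x i) (γ t) ≤ A + 6 * δ) ∧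
      dist (x 0) (x n) ≥
        (∑ j ∈ Finset.range n, dist (x j) (x (j + 1))) - 2 * (A + 6 * δ) * ((n - 1 : ℕ) : ℝ) := by
  constructor
  · intro γ hγ i hin
    rcases Nat.eq_zero_or_pos i with rfl | hi0
    · refine ⟨0, ⟨le_rfl, dist_nonneg⟩, ?_⟩
      rw [hγ.1, dist_self]; linarith
    rcases eq_or_lt_of_le hin with rfl | hilt
    · refine ⟨dist (x 0) (x i), ⟨dist_nonneg, le_rfl⟩, ?_⟩
      rw [hγ.2.1, dist_self]; linarith
    · have hg := chainMain δ A hδ hA hhyp x n hgp hdist i hi0 hilt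
      obtain ⟨t, htm, hle⟩ := point_near δ hhyp (x 0) (x n) (x i) γ hγ
      exact ⟨t, htm, by linarith⟩
  · have sum_claim : ∀ k, k ≤ n → dist (x 0) (x k) ≥
        (∑ j ∈ Finset.range k, dist (x j) (x (j + 1))) - 2 * (A + 6 * δ) * ((k - 1 : ℕ) : ℝ) := by
      intro k
      induction k with
      | zero => intro _; simp
      | succ k ih =>
        intro hk
        have hkn : k < n := Nat.lt_of_succ_le hk
        rcases Nat.eq_zero_or_pos k with rfl | hk0
        · norm_num [Finset.sum_range_one]
        · have hg : gromovProd (x 0) (x (k + 1)) (x k) ≤ A + 2 * δ :=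
            chainQ δ A hδ hA hhyp x n hgp hdist k hk0 hkn 0 hk0
          have hid : dist (x 0) (x (k + 1)) =
              dist (x 0) (x k) + dist (x k) (x (k + 1))
                - 2 * gromovProd (x 0) (x (k + 1)) (x k) := by
            simp only [gromovProd]
            rw [dist_comm (x (k + 1)) (x k)]; ring
          have hIH := ih (le_of_lt hkn)
          rw [Finset.sum_range_succ]
          have hc1 : ((k + 1 - 1 : ℕ) : ℝ) = ((k - 1 : ℕ) : ℝ) + 1 := by
            have e : k + 1 - 1 = (k - 1) + 1 := by omega
            rw [e]; push_cast; ring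
          rw [hc1]
          have hexp : 2 * (A + 6 * δ) * (((k - 1 : ℕ) : ℝ) + 1)
              = 2 * (A + 6 * δ) * ((k - 1 : ℕ) : ℝ) + 2 * (A + 6 * δ) := by ring
          rw [hexp]
          linarith
    exact sum_claim n le_rfl
end

section
/- Let X be a δ-hyperbolic geodesic metric space and suppose x₀, x₁, ..., x_n are points in X with (x_{i-1} | x_{i+1})_{x_i} ≤ A for each 0 < i < n and d(x_i, x_{i+1}) > 4A + 24δ for each i. Then the chain is a quasi-geodesic in the sense that d(x₀, x_n) ≤ Σ_{j=1}^{n} d(x_{j-1}, x_j) ≤ 2 d(x₀, x_n). -/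
open Set Metric

theorem chain_is_quasigeodesic {X : Type*} [MetricSpace X] (δ A : ℝ) (hδ : 0 ≤ δ) (hA : 0 ≤ A)
    (hhyp : ∀ x y z w : X, min (gromovProd x z w) (gromovProd y z w) - δ ≤ gromovProd x y w)
    (hgeo : ∀ a b : X, ∃ γ : ℝ → X, IsGeodesicFrom γ a b)
    (x : ℕ → X) (n : ℕ)
    (hgp : ∀ i, 0 < i → i < n → gromovProd (x (i - 1)) (x (i + 1)) (x i) ≤ A)
    (hdist : ∀ i < n, dist (x i) (x (i + 1)) > 4 * A + 24 * δ) :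
    dist (x 0) (x n) ≤ (∑ j ∈ Finset.range n, dist (x j) (x (j + 1))) ∧
      (∑ j ∈ Finset.range n, dist (x j) (x (j + 1))) ≤ 2 * dist (x 0) (x n) := by
  refine ⟨dist_le_range_sum_dist x n, ?_⟩
  rcases Nat.eq_zero_or_pos n with hn | hn
  · simp [hn]
  -- key induction
  have key : ∀ k, 1 ≤ k → k ≤ n →
      (k < n → gromovProd (x 0) (x (k + 1)) (x k) ≤ A + δ) ∧
      (∑ j ∈ Finset.range k, dist (x j) (x (j + 1))) - 2 * ((k : ℝ) - 1) * (A + δ)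
        ≤ dist (x 0) (x k) := by
    intro k
    induction k with
    | zero => omega
    | succ k ih =>
      intro _ hkn
      rcases Nat.eq_zero_or_pos k with hk0 | hk1
      · subst hk0
        constructor
        · intro h1n
          have := hgp 1 (by norm_num) h1n
          simpa using this.trans (by linarith)
        · simp
      · obtain ⟨ihgp, ihd⟩ := ih hk1 (by omega)
        have hgpk : gromovProd (x 0) (x (k + 1)) (x k) ≤ A + δ := ihgp (by omega)
        have hdk : dist (x k) (x (k + 1)) > 4 * A + 24 * δ := hdist k (by omega)
        -- distance expansion
        have hexp : dist (x 0) (x (k + 1)) =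
            dist (x 0) (x k) + dist (x k) (x (k + 1))
              - 2 * gromovProd (x 0) (x (k + 1)) (x k) := by
          simp only [gromovProd]
          rw [dist_comm (x (k+1)) (x k)]
          ring
        constructor
        · intro hk1n
          -- show gromovProd (x 0) (x (k+2)) (x (k+1)) ≤ A + δ
          have hrev : gromovProd (x k) (x 0) (x (k + 1)) > A + δ := by
            have hid : gromovProd (x k) (x 0) (x (k + 1))
                + gromovProd (x 0) (x (k + 1)) (x k) = dist (x k) (x (k + 1)) := by
              simp only [gromovProd]
              rw [dist_comm (x 0) (x (k+1)), dist_comm (x k) (x 0),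
                dist_comm (x (k+1)) (x k)]
              ring
            linarith
          have hmid : gromovProd (x k) (x (k + 2)) (x (k + 1)) ≤ A := by
            have := hgp (k + 1) (by omega) hk1n
            simpa using this
          have hmin := hhyp (x k) (x (k + 2)) (x 0) (x (k + 1))
          rcases min_le_iff.mp (le_refl (min (gromovProd (x k) (x 0) (x (k+1)))
              (gromovProd (x (k+2)) (x 0) (x (k+1))))) with h | h
          · -- we argue directly via cases on the min
            have hcase := min_cases (gromovProd (x k) (x 0) (x (k+1)))
              (gromovProd (x (k+2)) (x 0) (x (k+1)))
            rcases hcase with ⟨heq, hle⟩ | ⟨heq, hle⟩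
            · -- min is first: first ≤ A + δ, contradiction with hrev
              rw [heq] at hmin
              linarith
            · rw [heq] at hmin
              have : gromovProd (x (k+2)) (x 0) (x (k+1)) ≤ A + δ := by linarith
              have hsym : gromovProd (x 0) (x (k+2)) (x (k+1))
                  = gromovProd (x (k+2)) (x 0) (x (k+1)) := by
                simp only [gromovProd]
                rw [dist_comm (x 0) (x (k+2))]
                ring
              rw [show k + 1 + 1 = k + 2 from rfl, hsym]
              linarith
          · have hcase := min_cases (gromovProd (x k) (x 0) (x (k+1)))
              (gromovProd (x (k+2)) (x 0) (x (k+1)))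
            rcases hcase with ⟨heq, hle⟩ | ⟨heq, hle⟩
            · rw [heq] at hmin
              linarith
            · rw [heq] at hmin
              have : gromovProd (x (k+2)) (x 0) (x (k+1)) ≤ A + δ := by linarith
              have hsym : gromovProd (x 0) (x (k+2)) (x (k+1))
                  = gromovProd (x (k+2)) (x 0) (x (k+1)) := by
                simp only [gromovProd]
                rw [dist_comm (x 0) (x (k+2))]
                ring
              rw [show k + 1 + 1 = k + 2 from rfl, hsym]
              linarith
        · rw [Finset.sum_range_succ]
          push_cast
          linarith
  obtain ⟨-, hd⟩ := key n hn le_rfl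
  have hsum : (n : ℝ) * (4 * A + 24 * δ) ≤ ∑ j ∈ Finset.range n, dist (x j) (x (j + 1)) := by
    calc (n : ℝ) * (4 * A + 24 * δ)
        = ∑ _j ∈ Finset.range n, (4 * A + 24 * δ) := by
          rw [Finset.sum_const, Finset.card_range, nsmul_eq_mul]
      _ ≤ _ := Finset.sum_le_sum fun j hj => (hdist j (Finset.mem_range.mp hj)).le
  have hn1 : (1 : ℝ) ≤ (n : ℝ) := by exact_mod_cast hn
  nlinarith [hd, hsum]
end

section
/- Let X be a δ-hyperbolic geodesic metric space, K ≥ 1 a constant, g an isometry of X, and γ a point with d(γ, g·γ) ≤ 1. Suppose that for every point x in X, d(x, g·x) ≥ (d(x, γ) - 3)/K. Then for every point α in X, the Gromov product satisfies (α | g·α)_γ ≤ 4δ + (12δ + 3)K + 5. -/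
open Set

theorem gromovProd_orbit_bound {X : Type*} [MetricSpace X] (δ : ℝ) (hδ : 0 ≤ δ)
    (hhyp : ∀ x y z w : X, min (gromovProd x z w) (gromovProd y z w) - δ ≤ gromovProd x y w)
    (hgeo : ∀ a b : X, ∃ γ : ℝ → X, IsGeodesicFrom γ a b)
    (K : ℝ) (hK : 1 ≤ K) (g : X → X) (hg : Isometry g) (γ : X) (hγ : dist γ (g γ) ≤ 1)
    (hdisp : ∀ x : X, (dist x γ - 3) / K ≤ dist x (g x)) :
    ∀ α : X, gromovProd α (g α) γ ≤ 4 * δ + (12 * δ + 3) * K + 5 := by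
  intro α
  obtain ⟨c, hc0, hcD, hc⟩ := hgeo γ α
  set t := gromovProd α (g α) γ with htdef
  have ht0 : 0 ≤ t := by
    have h1 := dist_triangle α γ (g α)
    have h2 : dist γ (g α) = dist (g α) γ := dist_comm _ _
    simp only [htdef, gromovProd]
    linarith
  have htle : t ≤ dist γ α := by
    have h1 := dist_triangle (g α) α γ
    have h2 : dist γ α = dist α γ := dist_comm _ _
    have h3 : dist (g α) α = dist α (g α) := dist_comm _ _
    simp only [htdef, gromovProd]
    linarith
  set x := c t with hxdef
  have hmem : t ∈ Icc (0:ℝ) (dist γ α) := ⟨ht0, htle⟩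
  have hmem0 : (0:ℝ) ∈ Icc (0:ℝ) (dist γ α) := ⟨le_refl _, dist_nonneg⟩
  have hmemD : dist γ α ∈ Icc (0:ℝ) (dist γ α) := ⟨dist_nonneg, le_refl _⟩
  have hxγ : dist x γ = t := by
    have := hc t hmem 0 hmem0
    rw [hc0] at this
    rw [this]
    rw [abs_of_nonneg (by linarith)]
    ring
  have hxα : dist x α = dist γ α - t := by
    have := hc t hmem (dist γ α) hmemD
    rw [hcD] at this
    rw [this, abs_of_nonpos (by linarith)]
    ring
  -- (x | α)_γ = t
  have hA1 : gromovProd x α γ = t := by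
    have h2 : dist α γ = dist γ α := dist_comm _ _
    simp only [gromovProd, hxγ, hxα, h2]
    ring
  -- (g x | g α)_γ ≥ t - 1
  have hA2 : t - 1 ≤ gromovProd (g x) (g α) γ := by
    have e1 : dist (g x) (g α) = dist x α := hg.dist_eq x α
    have e2 : dist (g x) (g γ) = dist x γ := hg.dist_eq x γ
    have e3 : dist (g α) (g γ) = dist α γ := hg.dist_eq α γ
    have t1 : dist (g x) (g γ) ≤ dist (g x) γ + dist γ (g γ) := dist_triangle _ _ _
    have t2 : dist (g α) (g γ) ≤ dist (g α) γ + dist γ (g γ) := dist_triangle _ _ _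
    have h2 : dist α γ = dist γ α := dist_comm _ _
    simp only [gromovProd]
    rw [e2] at t1; rw [e3] at t2; rw [e1, hxα]
    rw [hxγ] at t1
    rw [h2] at t2
    linarith
  -- (α | g x)_γ ≥ t - 1 - δ
  have hB : t - 1 - δ ≤ gromovProd α (g x) γ := by
    have h := hhyp α (g x) (g α) γ
    have hmin : t - 1 ≤ min (gromovProd α (g α) γ) (gromovProd (g x) (g α) γ) :=
      le_min (by linarith) hA2
    linarith
  -- (x | g x)_γ ≥ t - 1 - 2δ
  have hC : t - 1 - 2 * δ ≤ gromovProd x (g x) γ := by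
    have h := hhyp x (g x) α γ
    have hsym : gromovProd (g x) α γ = gromovProd α (g x) γ := by
      simp only [gromovProd, dist_comm α (g x)]
      ring
    have hmin : t - 1 - δ ≤ min (gromovProd x α γ) (gromovProd (g x) α γ) := by
      apply le_min (by rw [hA1]; linarith)
      rw [hsym]; exact hB
    linarith
  -- displacement of x is small
  have hKpos : (0:ℝ) < K := by linarith
  have hd : dist x (g x) ≤ 3 + 4 * δ := by
    have hgxγ : dist (g x) γ ≤ t + 1 := by
      have t1 : dist (g x) γ ≤ dist (g x) (g γ) + dist (g γ) γ := dist_triangle _ _ _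
      have e2 : dist (g x) (g γ) = dist x γ := hg.dist_eq x γ
      have h2 : dist (g γ) γ = dist γ (g γ) := dist_comm _ _
      rw [e2, hxγ, h2] at t1
      linarith
    simp only [gromovProd] at hC
    rw [hxγ] at hC
    linarith
  have hfin := hdisp x
  rw [hxγ] at hfin
  rw [div_le_iff₀ hKpos] at hfin
  have : t - 3 ≤ (3 + 4 * δ) * K := le_trans hfin (by nlinarith)
  nlinarith
end
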